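/- arXiv:1805.04677 — 5 statements merged into one kernel-verified Lean document; each statement's English description precedes it below -/
import Mathlib

section
/- Let Σ = {A, B} be a pair of n×n real matrices that are both idempotent (A·A = A and B·B = B) and let a ∈ ℝ^n. Then for every integer k ≥ 1, the set X_k(Σ, a) has at most 2k elements. -/
open Matrix Set

noncomputable section

/-- `XSeq S a k` is the set of all vectors `T_{k-1} ⋯ T_0 · a` with each `T_j ∈ S`
(and `XSeq S a 0 = {a}`). -/
def XSeq {n : ℕ} (S : Set (Matrix (Fin n) (Fin n) ℝ)) (a : Fin n → ℝ) : ℕ → Set (Fin n → ℝ)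
  | 0 => {a}
  | k + 1 => ⋃ A ∈ S, A.mulVec '' XSeq S a k

def PHull {n : ℕ} (S : Set (Matrix (Fin n) (Fin n) ℝ)) (a : Fin n → ℝ) (k : ℕ) :
    Set (Fin n → ℝ) :=
  convexHull ℝ (XSeq S a k)

def EPts {n : ℕ} (S : Set (Matrix (Fin n) (Fin n) ℝ)) (a : Fin n → ℝ) (k : ℕ) :
    Set (Fin n → ℝ) :=
  Set.extremePoints ℝ (PHull S a k)

def NExt {n : ℕ} (S : Set (Matrix (Fin n) (Fin n) ℝ)) (a : Fin n → ℝ) (k : ℕ) : ℕ :=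
  (EPts S a k).ncard

/-! Idempotence lets a word in `x` and `y` collapse every run of equal letters, so a product of
`k ≥ 1` factors taken from `{x, y}` is an alternating word `x * y * x * ⋯` or `y * x * y * ⋯`
with between `1` and `k` factors; there are at most `2k` of those. -/

section AlternatingProduct

variable {M : Type*} [Monoid M]

def altProd (x y : M) : ℕ → M
  | 0 => 1
  | m + 1 => x * altProd y x m

theorem altProd_succ (x y : M) (m : ℕ) : altProd x y (m + 1) = x * altProd y x m := rfl

theorem IsIdempotentElem.mul_altProd {x : M} (hx : IsIdempotentElem x) (y : M) {m : ℕ}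
    (hm : m ≠ 0) : x * altProd x y m = altProd x y m := by
  obtain ⟨m, rfl⟩ := Nat.exists_eq_succ_of_ne_zero hm
  rw [altProd_succ, ← mul_assoc, hx.eq]

end AlternatingProduct

section AlternatingVectors

variable {n : ℕ}

def altVecs (A B : Matrix (Fin n) (Fin n) ℝ) (a : Fin n → ℝ) (k : ℕ) : Set (Fin n → ℝ) :=
  (fun m => altProd A B m *ᵥ a) '' Icc 1 k ∪ (fun m => altProd B A m *ᵥ a) '' Icc 1 k

theorem altVecs_comm (A B : Matrix (Fin n) (Fin n) ℝ) (a : Fin n → ℝ) (k : ℕ) :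
    altVecs A B a k = altVecs B A a k :=
  union_comm _ _

theorem finite_altVecs (A B : Matrix (Fin n) (Fin n) ℝ) (a : Fin n → ℝ) (k : ℕ) :
    (altVecs A B a k).Finite :=
  ((finite_Icc 1 k).image _).union ((finite_Icc 1 k).image _)

theorem ncard_altVecs_le (A B : Matrix (Fin n) (Fin n) ℝ) (a : Fin n → ℝ) (k : ℕ) :
    (altVecs A B a k).ncard ≤ 2 * k := by
  have hIcc : (Icc 1 k).ncard = k := by simp
  calc (altVecs A B a k).ncard
      ≤ ((fun m => altProd A B m *ᵥ a) '' Icc 1 k).ncard +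
          ((fun m => altProd B A m *ᵥ a) '' Icc 1 k).ncard := ncard_union_le _ _
    _ ≤ (Icc 1 k).ncard + (Icc 1 k).ncard := add_le_add (ncard_image_le (finite_Icc 1 k))
          (ncard_image_le (finite_Icc 1 k))
    _ = 2 * k := by omega

theorem mulVec_mem_altVecs_succ {A : Matrix (Fin n) (Fin n) ℝ} (hA : IsIdempotentElem A)
    (B : Matrix (Fin n) (Fin n) ℝ) (a : Fin n → ℝ) {k : ℕ} {v : Fin n → ℝ}
    (hv : v ∈ altVecs A B a k) : A *ᵥ v ∈ altVecs A B a (k + 1) := by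
  rcases hv with ⟨m, ⟨hm1, hmk⟩, rfl⟩ | ⟨m, ⟨hm1, hmk⟩, rfl⟩
  · refine Or.inl ⟨m, ⟨hm1, hmk.trans k.le_succ⟩, ?_⟩
    rw [mulVec_mulVec, hA.mul_altProd B (by omega)]
  · exact Or.inl ⟨m + 1, ⟨by omega, by omega⟩, (mulVec_mulVec _ _ _).symm⟩

theorem xSeq_pair_subset_altVecs {A B : Matrix (Fin n) (Fin n) ℝ} (hA : IsIdempotentElem A)
    (hB : IsIdempotentElem B) (a : Fin n → ℝ) {k : ℕ} (hk : 1 ≤ k) :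
    XSeq {A, B} a k ⊆ altVecs A B a k := by
  induction k, hk using Nat.le_induction with
  | base =>
    rintro _ ⟨_, ⟨T, rfl⟩, _, ⟨hT, rfl⟩, v, rfl, rfl⟩
    rcases hT with rfl | rfl
    · exact Or.inl ⟨1, ⟨le_rfl, le_rfl⟩, by simp [altProd]⟩
    · exact Or.inr ⟨1, ⟨le_rfl, le_rfl⟩, by simp [altProd]⟩
  | succ k _ ih =>
    rintro _ ⟨_, ⟨T, rfl⟩, _, ⟨hT, rfl⟩, v, hv, rfl⟩
    rcases hT with rfl | rfl
    · exact mulVec_mem_altVecs_succ hA B a (ih hv)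
    · rw [altVecs_comm] at ih ⊢
      exact mulVec_mem_altVecs_succ hB A a (ih hv)

end AlternatingVectors

/-- For a pair of idempotent matrices, `X_k(Σ, a)` has at most `2k` elements for `k ≥ 1`. -/
theorem stmt2 {n : ℕ} (A B : Matrix (Fin n) (Fin n) ℝ)
    (hA : A * A = A) (hB : B * B = B) (a : Fin n → ℝ) (k : ℕ) (hk : 1 ≤ k) :
    (XSeq {A, B} a k).ncard ≤ 2 * k :=
  calc (XSeq {A, B} a k).ncard
      ≤ (altVecs A B a k).ncard :=
        ncard_le_ncard (xSeq_pair_subset_altVecs hA hB a hk) (finite_altVecs A B a k)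
    _ ≤ 2 * k := ncard_altVecs_le A B a k

end
end

section
/- Let Σ = {A_1, …, A_m} be a set of m real n×n matrices such that at most one of the matrices has rank greater than one (i.e., rank(A_i) ≤ 1 for all i except possibly one index). Then for every a ∈ ℝ^n and every natural number k, N_k(Σ, a) ≤ 1 + 2k(m−1). -/
open Matrix Set

noncomputable section

/-!
An extreme point of `P_{k+1}` lies in some `A_i X_k` and is then extreme in `conv (A_i X_k)`, so
`N_{k+1}` is at most the sum over `i` of the numbers of extreme points of `conv (A_i X_k)`. Under a
linear map, every extreme point of the image hull is the image of an extreme point of `P_k`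
(an extreme point of the fibre, which exists by Krein–Milman, is extreme in `P_k`), so the one
matrix of higher rank contributes at most `N_k`. A matrix of rank at most one maps `X_k` into a
line, and a collinear set has at most two extreme points because of three collinear points one
lies between the other two. Hence `N_{k+1} ≤ N_k + 2(m - 1)`.
-/

theorem Collinear.convexHull {𝕜 E : Type*} [Field 𝕜] [PartialOrder 𝕜] [AddCommGroup E] [Module 𝕜 E]
    {s : Set E} (h : Collinear 𝕜 s) : Collinear 𝕜 (convexHull 𝕜 s) := by
  rwa [Collinear, ← direction_affineSpan, affineSpan_convexHull, direction_affineSpan]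

section Convex

variable {𝕜 E : Type*} [Field 𝕜] [LinearOrder 𝕜] [IsStrictOrderedRing 𝕜] [AddCommGroup E]
  [Module 𝕜 E]

theorem eq_or_eq_of_wbtw_of_mem_extremePoints {s : Set E} {x y z : E} (hx : x ∈ s) (hz : z ∈ s)
    (hy : y ∈ s.extremePoints 𝕜) (h : Wbtw 𝕜 x y z) : y = x ∨ y = z := by
  by_contra! hne
  have hseg : y ∈ openSegment 𝕜 x z := by
    have := h.mem_segment
    rw [← insert_endpoints_openSegment] at this
    simpa [hne.1, hne.2] using this
  exact hne.1 (hy.2 hx hz hseg).symm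

theorem Collinear.ncard_extremePoints_le_two {s : Set E} (h : Collinear 𝕜 s) :
    (s.extremePoints 𝕜).ncard ≤ 2 := by
  rcases (s.extremePoints 𝕜).finite_or_infinite with hfin | hinf
  · by_contra! hlt
    obtain ⟨x, hx, y, hy, z, hz, hxy, hxz, hyz⟩ := (Set.two_lt_ncard hfin).1 hlt
    have hs := extremePoints_subset (𝕜 := 𝕜) (A := s)
    have hxyz : Collinear 𝕜 {x, y, z} := h.subset <| by
      simp only [Set.insert_subset_iff, Set.singleton_subset_iff]
      exact ⟨hs hx, hs hy, hs hz⟩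
    rcases hxyz.wbtw_or_wbtw_or_wbtw with hb | hb | hb
    · rcases eq_or_eq_of_wbtw_of_mem_extremePoints (hs hx) (hs hz) hy hb with h | h <;> tauto
    · rcases eq_or_eq_of_wbtw_of_mem_extremePoints (hs hy) (hs hx) hz hb with h | h <;> tauto
    · rcases eq_or_eq_of_wbtw_of_mem_extremePoints (hs hz) (hs hy) hx hb with h | h <;> tauto
  · simp [hinf.ncard]

theorem extremePoints_convexHull_iUnion_subset {ι : Type*} (s : ι → Set E) :
    (convexHull 𝕜 (⋃ i, s i)).extremePoints 𝕜 ⊆ ⋃ i, (convexHull 𝕜 (s i)).extremePoints 𝕜 := by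
  intro x hx
  obtain ⟨i, hi⟩ := Set.mem_iUnion.1 (extremePoints_convexHull_subset hx)
  exact Set.mem_iUnion.2 ⟨i, inter_extremePoints_subset_extremePoints_of_subset
    (convexHull_mono (Set.subset_iUnion s i)) ⟨subset_convexHull 𝕜 _ hi, hx⟩⟩

theorem ncard_extremePoints_convexHull_iUnion_le {ι : Type*} [Fintype ι] {s : ι → Set E}
    (hs : ∀ i, (s i).Finite) :
    ((convexHull 𝕜 (⋃ i, s i)).extremePoints 𝕜).ncard ≤
      ∑ i, ((convexHull 𝕜 (s i)).extremePoints 𝕜).ncard :=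
  (Set.ncard_le_ncard (extremePoints_convexHull_iUnion_subset s)
    (Set.finite_iUnion fun i => (hs i).subset extremePoints_convexHull_subset)).trans
    (Set.ncard_iUnion_le_of_fintype _)

end Convex

section Linear

variable {E F : Type*} [NormedAddCommGroup E] [NormedSpace ℝ E] [FiniteDimensional ℝ E]
  [NormedAddCommGroup F] [NormedSpace ℝ F]

theorem extremePoints_convexHull_image_subset (f : E →ₗ[ℝ] F) {X : Set E} (hX : X.Finite) :
    (convexHull ℝ (f '' X)).extremePoints ℝ ⊆ f '' (convexHull ℝ X).extremePoints ℝ := by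
  rw [← f.image_convexHull]
  exact surjOn_extremePoints_image (LinearMap.toContinuousLinearMap f).toContinuousAffineMap
    (hX.isCompact_convexHull (𝕜 := ℝ))

theorem ncard_extremePoints_convexHull_image_le (f : E →ₗ[ℝ] F) {X : Set E} (hX : X.Finite) :
    ((convexHull ℝ (f '' X)).extremePoints ℝ).ncard ≤ ((convexHull ℝ X).extremePoints ℝ).ncard :=
  have hfin := hX.subset extremePoints_convexHull_subset
  (Set.ncard_le_ncard (extremePoints_convexHull_image_subset f hX) (hfin.image f)).trans
    (Set.ncard_image_le hfin)

end Linear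

theorem LinearMap.collinear_image {k E F : Type*} [DivisionRing k] [AddCommGroup E] [Module k E]
    [AddCommGroup F] [Module k F] (f : E →ₗ[k] F) (hf : Module.rank k (LinearMap.range f) ≤ 1)
    (X : Set E) : Collinear k (f '' X) := by
  refine le_trans (Submodule.rank_mono ?_) hf
  rw [← f.coe_toAffineMap, ← AffineMap.map_vectorSpan]
  exact LinearMap.map_le_range

theorem Matrix.collinear_mulVec_image {m n : Type*} [Fintype m] [Fintype n] [DecidableEq n]
    {M : Matrix m n ℝ} (hM : M.rank ≤ 1) (X : Set (n → ℝ)) : Collinear ℝ (M.mulVec '' X) :=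
  M.mulVecLin.collinear_image (by rw [← Module.finrank_eq_rank]; exact_mod_cast hM) X

theorem XSeq_finite {n : ℕ} {S : Set (Matrix (Fin n) (Fin n) ℝ)} (hS : S.Finite)
    (a : Fin n → ℝ) (k : ℕ) : (XSeq S a k).Finite := by
  induction k with
  | zero => exact Set.finite_singleton a
  | succ k ih => exact hS.biUnion fun M _ => ih.image M.mulVec

theorem XSeq_range_succ {n : ℕ} {ι : Type*} (A : ι → Matrix (Fin n) (Fin n) ℝ)
    (a : Fin n → ℝ) (k : ℕ) :
    XSeq (Set.range A) a (k + 1) = ⋃ i, (A i).mulVec '' XSeq (Set.range A) a k :=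
  Set.biUnion_range

theorem NExt_zero {n : ℕ} (S : Set (Matrix (Fin n) (Fin n) ℝ)) (a : Fin n → ℝ) :
    NExt S a 0 = 1 := by
  simp [NExt, EPts, PHull, XSeq]

theorem NExt_range_succ_le {n : ℕ} {ι : Type*} [Fintype ι] (A : ι → Matrix (Fin n) (Fin n) ℝ)
    {i₀ : ι} (hrank : ∀ i, i ≠ i₀ → (A i).rank ≤ 1) (a : Fin n → ℝ) (k : ℕ) :
    NExt (Set.range A) a (k + 1) ≤ NExt (Set.range A) a k + 2 * (Fintype.card ι - 1) := by
  classical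
  set X := XSeq (Set.range A) a k
  have hX : X.Finite := XSeq_finite (Set.finite_range A) a k
  let N i := ((convexHull ℝ ((A i).mulVec '' X)).extremePoints ℝ).ncard
  have hN₀ : N i₀ ≤ NExt (Set.range A) a k :=
    ncard_extremePoints_convexHull_image_le (A i₀).mulVecLin hX
  have hN : ∀ i ∈ Finset.univ.erase i₀, N i ≤ 2 := fun i hi =>
    (((A i).collinear_mulVec_image (hrank i (Finset.ne_of_mem_erase hi)) X).convexHull
      ).ncard_extremePoints_le_two
  calc NExt (Set.range A) a (k + 1) ≤ ∑ i, N i := by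
        rw [NExt, EPts, PHull, XSeq_range_succ]
        exact ncard_extremePoints_convexHull_iUnion_le fun i => hX.image _
    _ = N i₀ + ∑ i ∈ Finset.univ.erase i₀, N i :=
        (Finset.add_sum_erase _ _ (Finset.mem_univ _)).symm
    _ ≤ NExt (Set.range A) a k + ∑ i ∈ Finset.univ.erase i₀, 2 :=
        add_le_add hN₀ (Finset.sum_le_sum hN)
    _ = NExt (Set.range A) a k + 2 * (Fintype.card ι - 1) := by
        rw [Finset.sum_const, Finset.card_erase_of_mem (Finset.mem_univ _), Finset.card_univ,
          smul_eq_mul, mul_comm]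

/-- If at most one of the `m` matrices has rank greater than one, then
`N_k(Σ, a) ≤ 1 + 2k(m-1)`. -/
theorem stmt3 {n m : ℕ} (A : Fin m → Matrix (Fin n) (Fin n) ℝ)
    (hrank : ∃ i₀ : Fin m, ∀ i : Fin m, i ≠ i₀ → (A i).rank ≤ 1)
    (a : Fin n → ℝ) (k : ℕ) :
    NExt (Set.range A) a k ≤ 1 + 2 * k * (m - 1) := by
  obtain ⟨i₀, hi₀⟩ := hrank
  induction k with
  | zero => simp [NExt_zero]
  | succ k ih =>
    have hstep := NExt_range_succ_le A hi₀ a k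
    rw [Fintype.card_fin] at hstep
    calc NExt (Set.range A) a (k + 1) ≤ 1 + 2 * k * (m - 1) + 2 * (m - 1) := by omega
      _ = 1 + 2 * (k + 1) * (m - 1) := by ring

end
end

section
/- Let Σ = {A, B} be a pair of 2×2 real matrices that share at least one common eigenvector, i.e., there exists a nonzero vector q ∈ ℝ² and real numbers λ, μ with A·q = λ·q and B·q = μ·q. Then for every a ∈ ℝ² and every integer k ≥ 1, N_k(Σ, a) ≤ 2k. -/
open Matrix Set

noncomputable section

/-!
Let `q` be a common eigenvector and `wedge q x = q₀ x₁ - q₁ x₀`, whose level sets are the lines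
parallel to `q`. Since `A` and `B` fix the direction `q`, they multiply `wedge q` by constants
`α` and `β`, so a point `T_{k-1} ⋯ T_0 a` containing `j` factors `A` lies on the line
`wedge q x = α ^ j * β ^ (k - j) * wedge q a`. A line contains at most two extreme points of a set,
and the levels `j = k`, `j = 0` come only from the single words `A ^ k` and `B ^ k`; hence there
are at most `2 + 2 (k - 1) = 2 k` extreme points.
-/

section ExtremePoints

variable {𝕜 E : Type*} [Field 𝕜] [LinearOrder 𝕜] [IsStrictOrderedRing 𝕜]
  [AddCommGroup E] [Module 𝕜 E] {A : Set E}

theorem Wbtw.eq_or_eq_of_mem_extremePoints {x y z : E} (h : Wbtw 𝕜 x y z) (hx : x ∈ A)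
    (hz : z ∈ A) (hy : y ∈ A.extremePoints 𝕜) : x = y ∨ z = y := by
  rw [Wbtw, affineSegment_eq_segment] at h
  exact (mem_extremePoints_iff_forall_segment.1 hy).2 x hx z hz h

theorem Collinear.encard_le_two_of_subset_extremePoints {s : Set E} (hs : Collinear 𝕜 s)
    (hsA : s ⊆ A.extremePoints 𝕜) : s.encard ≤ 2 := by
  by_contra! h
  obtain ⟨t, hts, ht⟩ := exists_subset_encard_eq (Order.add_one_le_of_lt h)
  obtain ⟨x, y, z, hxy, hxz, hyz, rfl⟩ := encard_eq_three.1 ht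
  have hE : {x, y, z} ⊆ A.extremePoints 𝕜 := hts.trans hsA
  rcases (hs.subset hts).wbtw_or_wbtw_or_wbtw with h | h | h
  · exact (h.eq_or_eq_of_mem_extremePoints (hE (by simp)).1 (hE (by simp)).1
      (hE (by simp))).elim hxy (fun h => hyz h.symm)
  · exact (h.eq_or_eq_of_mem_extremePoints (hE (by simp)).1 (hE (by simp)).1
      (hE (by simp))).elim hyz hxz
  · exact (h.eq_or_eq_of_mem_extremePoints (hE (by simp)).1 (hE (by simp)).1
      (hE (by simp))).elim (fun h => hxz h.symm) (fun h => hxy h.symm)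

theorem encard_extremePoints_le_of_subset_union_collinear {ι : Type*} {s : Set E}
    (t : Finset ι) (L : ι → Set E) (hL : ∀ i, Collinear 𝕜 (L i))
    (hA : A.extremePoints 𝕜 ⊆ s ∪ ⋃ i ∈ t, L i) :
    (A.extremePoints 𝕜).encard ≤ s.encard + 2 * t.card := by
  have hsplit : A.extremePoints 𝕜 ⊆ s ∪ ⋃ i ∈ t, (L i ∩ A.extremePoints 𝕜) := by
    intro x hx
    rcases hA hx with hs | hL
    · exact Or.inl hs
    · obtain ⟨i, hi, hxi⟩ := mem_iUnion₂.1 hL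
      exact Or.inr (mem_iUnion₂.2 ⟨i, hi, hxi, hx⟩)
  calc (A.extremePoints 𝕜).encard
      ≤ s.encard + ∑ i ∈ t, (L i ∩ A.extremePoints 𝕜).encard :=
        (encard_le_encard hsplit).trans <| (encard_union_le _ _).trans <|
          add_le_add_right (t.set_encard_biUnion_le _) _
    _ ≤ s.encard + ∑ _i ∈ t, 2 := by
        gcongr with i
        exact ((hL i).subset inter_subset_left).encard_le_two_of_subset_extremePoints
          inter_subset_right
    _ = s.encard + 2 * t.card := by rw [Finset.sum_const, nsmul_eq_mul, mul_comm]

end ExtremePoints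

section Wedge

def wedge (u v : Fin 2 → ℝ) : ℝ := u 0 * v 1 - u 1 * v 0

-- From the 2×2 identity `wedge u (M v) + wedge (M u) v = tr M * wedge u v`.
theorem wedge_mulVec_of_mulVec_eq_smul {M : Matrix (Fin 2) (Fin 2) ℝ} {q : Fin 2 → ℝ}
    {lam : ℝ} (hq : M *ᵥ q = lam • q) (x : Fin 2 → ℝ) :
    wedge q (M *ᵥ x) = (M.trace - lam) * wedge q x := by
  have h0 := congrFun hq 0
  have h1 := congrFun hq 1
  simp only [mulVec, dotProduct, Fin.sum_univ_two, Pi.smul_apply, smul_eq_mul] at h0 h1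
  simp only [wedge, mulVec, dotProduct, Fin.sum_univ_two, trace_fin_two]
  linear_combination x 0 * h1 - x 1 * h0

theorem exists_eq_smul_of_wedge_eq_zero {q d : Fin 2 → ℝ} (hq : q ≠ 0) (hd : wedge q d = 0) :
    ∃ r : ℝ, d = r • q := by
  unfold wedge at hd
  by_cases h0 : q 0 = 0
  · have h1 : q 1 ≠ 0 := fun h1 => hq (funext fun i => by fin_cases i <;> assumption)
    have hd0 : d 0 = 0 := by
      rw [h0, zero_mul, zero_sub, neg_eq_zero] at hd
      exact (mul_eq_zero.1 hd).resolve_left h1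
    refine ⟨d 1 / q 1, funext fun i => ?_⟩
    fin_cases i
    · simp [h0, hd0]
    · simp [h1]
  · refine ⟨d 0 / q 0, funext fun i => ?_⟩
    fin_cases i
    · simp [h0]
    · simp only [Fin.mk_one, Pi.smul_apply, smul_eq_mul]
      field_simp
      linear_combination hd

theorem collinear_setOf_wedge_eq {q : Fin 2 → ℝ} (hq : q ≠ 0) (c : ℝ) :
    Collinear ℝ {x | wedge q x = c} := by
  rcases eq_empty_or_nonempty {x | wedge q x = c} with h | ⟨x₀, hx₀⟩
  · rw [h]; exact collinear_empty ℝ _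
  refine (collinear_iff_of_mem hx₀).2 ⟨q, fun x hx => ?_⟩
  obtain ⟨r, hr⟩ := exists_eq_smul_of_wedge_eq_zero (d := x - x₀) hq <| by
    have hx : wedge q x = c := hx
    have hx₀ : wedge q x₀ = c := hx₀
    simp only [wedge, Pi.sub_apply] at hx hx₀ ⊢
    linear_combination hx - hx₀
  exact ⟨r, by rw [vadd_eq_add, ← hr, sub_add_cancel]⟩

end Wedge

section Levels

variable {n : ℕ} {A B : Matrix (Fin n) (Fin n) ℝ} {a : Fin n → ℝ} {f : (Fin n → ℝ) → ℝ}
  {α β : ℝ}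

theorem exists_level_of_mem_XSeq_pair (hA : ∀ x, f (A *ᵥ x) = α * f x)
    (hB : ∀ x, f (B *ᵥ x) = β * f x) {k : ℕ} {x : Fin n → ℝ} (hx : x ∈ XSeq {A, B} a k) :
    ∃ j ≤ k, f x = α ^ j * β ^ (k - j) * f a ∧
      (j = k → x = (A ^ k) *ᵥ a) ∧ (j = 0 → x = (B ^ k) *ᵥ a) := by
  induction k generalizing x with
  | zero =>
    obtain rfl : x = a := hx
    exact ⟨0, le_rfl, by simp, fun _ => by simp, fun _ => by simp⟩
  | succ k ih =>
    simp only [XSeq, biUnion_pair, mem_union, mem_image] at hx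
    rcases hx with ⟨y, hy, rfl⟩ | ⟨y, hy, rfl⟩
    · obtain ⟨j, hj, hfy, hyA, -⟩ := ih hy
      refine ⟨j + 1, by omega, ?_, fun h => ?_, by omega⟩
      · rw [hA, hfy, Nat.add_sub_add_right, pow_succ]
        ring
      · rw [hyA (by omega), pow_succ', mulVec_mulVec]
    · obtain ⟨j, hj, hfy, -, hyB⟩ := ih hy
      refine ⟨j, by omega, ?_, by omega, fun h => ?_⟩
      · rw [hB, hfy, Nat.sub_add_comm hj, pow_succ β]
        ring
      · rw [hyB h, pow_succ', mulVec_mulVec]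

theorem XSeq_pair_subset (hA : ∀ x, f (A *ᵥ x) = α * f x) (hB : ∀ x, f (B *ᵥ x) = β * f x)
    (k : ℕ) : XSeq {A, B} a k ⊆ {(A ^ k) *ᵥ a, (B ^ k) *ᵥ a} ∪
      ⋃ j ∈ Finset.Ioo 0 k, {x | f x = α ^ j * β ^ (k - j) * f a} := by
  intro x hx
  obtain ⟨j, hj, hfx, hxA, hxB⟩ := exists_level_of_mem_XSeq_pair hA hB hx
  rcases eq_or_ne j k with rfl | hjk
  · exact Or.inl (Or.inl (hxA rfl))
  rcases eq_or_ne j 0 with rfl | hj0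
  · exact Or.inl (Or.inr (hxB rfl))
  exact Or.inr (mem_iUnion₂.2 ⟨j, Finset.mem_Ioo.2 ⟨by omega, by omega⟩, hfx⟩)

end Levels

/-- A pair of 2×2 matrices sharing a common eigenvector satisfies `N_k(Σ, a) ≤ 2k`
for all `k ≥ 1`. -/
theorem stmt4 (A B : Matrix (Fin 2) (Fin 2) ℝ)
    (hq : ∃ q : Fin 2 → ℝ, q ≠ 0 ∧ ∃ lam mu : ℝ,
      A.mulVec q = lam • q ∧ B.mulVec q = mu • q)
    (a : Fin 2 → ℝ) (k : ℕ) (hk : 1 ≤ k) :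
    NExt {A, B} a k ≤ 2 * k := by
  obtain ⟨q, hq0, lam, mu, hAq, hBq⟩ := hq
  have hE := (extremePoints_convexHull_subset (𝕜 := ℝ)).trans <| XSeq_pair_subset (a := a)
    (wedge_mulVec_of_mulVec_eq_smul hAq) (wedge_mulVec_of_mulVec_eq_smul hBq) k
  have hcard := encard_extremePoints_le_of_subset_union_collinear _ _
    (fun _ => collinear_setOf_wedge_eq hq0 _) hE
  have hends : ({(A ^ k) *ᵥ a, (B ^ k) *ᵥ a} : Set (Fin 2 → ℝ)).encard ≤ 2 :=
    (encard_insert_le _ _).trans (by rw [encard_singleton]; norm_num)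
  rw [Nat.card_Ioo] at hcard
  have hbound : (EPts {A, B} a k).encard ≤ (2 * k : ℕ) := by
    refine hcard.trans ((add_le_add hends le_rfl).trans ?_)
    norm_cast
    omega
  exact (encard_le_coe_iff_finite_ncard_le.1 hbound).2

end
end

section
/- There exist a real number α > 0 and a natural number k₀ such that for every a ∈ ℝ² and every integer k ≥ k₀, N_k(Σ₃, a) ≤ α·k², where Σ₃ = {A₂, A₃}. -/
open Matrix Set

noncomputable section

def M1 : Matrix (Fin 2) (Fin 2) ℝ := !![0, 1; 1, 0]
def M2 : Matrix (Fin 2) (Fin 2) ℝ := !![1, 1; 0, 1]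
def M3 : Matrix (Fin 2) (Fin 2) ℝ := !![1, 0; 1, 1]
def M4 : Matrix (Fin 2) (Fin 2) ℝ := !![1, 1; 1, 0]
def M5 : Matrix (Fin 2) (Fin 2) ℝ := !![0, 1; 1, 1]

/-!
Encode `T_{k-1} ⋯ T_0` as the word `[T_{k-1}, …, T_0]` over `Bool` (`false ↦ A₂`, `true ↦ A₃`).
The identity `A₂ A₃^(m+2) A₂ = ½ A₂^(m+2) A₃ A₂ + ⅙ A₂ A₃ A₂ A₃^(m+1) + ⅓ A₃^(m+1) A₂ A₃ A₂` and
its conjugate by the coordinate swap write a word containing a run `b (!b)^(m+2) b` as a strict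
convex combination of three words of the same length, one of them lexicographically smaller.
So a lexicographically minimal word representing an extreme point of `P_k` has no such run: it is
a constant run, an alternating block and a constant run, and there are at most `8 (k+1)²` of those.
-/

theorem XSeq_range_eq_image {n : ℕ} {ι : Type*} (f : ι → Matrix (Fin n) (Fin n) ℝ)
    (a : Fin n → ℝ) (k : ℕ) :
    XSeq (range f) a k = (fun w : List ι => (w.map f).prod *ᵥ a) '' {w | w.length = k} := by
  induction k with
  | zero => ext x; simp [XSeq, eq_comm]
  | succ k ih =>
    ext x
    simp only [XSeq, ih, mem_iUnion, mem_image, mem_range, mem_ofPred_eq, exists_prop]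
    constructor
    · rintro ⟨_, ⟨i, rfl⟩, _, ⟨w, hw, rfl⟩, rfl⟩
      exact ⟨i :: w, by simp [hw], by simp [mulVec_mulVec]⟩
    · rintro ⟨_ | ⟨i, w⟩, hw, rfl⟩
      · simp at hw
      · exact ⟨f i, ⟨i, rfl⟩, _, ⟨w, by simpa using hw, rfl⟩, by simp [mulVec_mulVec]⟩

theorem Convex.eq_of_mem_extremePoints_of_smul_add_smul_add_smul {E : Type*} [AddCommGroup E]
    [Module ℝ E] {s : Set E} (hs : Convex ℝ s) {x p q r : E} (hx : x ∈ s.extremePoints ℝ)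
    (hp : p ∈ s) (hq : q ∈ s) (hr : r ∈ s) {α β γ : ℝ} (hα : 0 < α) (hβ : 0 < β) (hγ : 0 < γ)
    (hsum : α + β + γ = 1) (h : α • p + β • q + γ • r = x) : p = x ∧ q = x ∧ r = x := by
  have hβγ : 0 < β + γ := by positivity
  set y := (β / (β + γ)) • q + (γ / (β + γ)) • r
  have hy : y ∈ s := hs hq hr (by positivity) (by positivity) (by field_simp)
  have hβγy : (β + γ) • y = β • q + γ • r := by
    simp only [y, smul_add, smul_smul, mul_div_cancel₀ _ hβγ.ne']
  replace hx := (mem_extremePoints.1 hx).2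
  obtain ⟨hpx, hyx⟩ :=
    hx p hp y hy ⟨α, β + γ, hα, hβγ, by linarith, by rw [hβγy, ← add_assoc, h]⟩
  exact ⟨hpx, hx q hq r hr ⟨β / (β + γ), γ / (β + γ), by positivity, by positivity, by field_simp,
    hyx⟩⟩

theorem List.Lex.append_of_length_eq {α : Type*} {r : α → α → Prop} {u v : List α}
    (h : List.Lex r u v) (hl : u.length = v.length) (s t : List α) :
    List.Lex r (u ++ s) (v ++ t) := by
  induction h with
  | nil => simp at hl
  | cons _ ih => exact .cons (ih (by simpa using hl))
  | rel h => exact .rel h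

theorem List.append_lt_append_of_lt {α : Type*} [LinearOrder α] {w₁ u v w₂ : List α}
    (h : u < v) (hl : u.length = v.length) :
    w₁ ++ u ++ w₂ < w₁ ++ v ++ w₂ := by
  rw [List.append_assoc, List.append_assoc]
  exact List.Lex.append_left _ (h.append_of_length_eq hl w₂ w₂) w₁

namespace ShearWords

def mat (b : Bool) : Matrix (Fin 2) (Fin 2) ℝ := bif b then M3 else M2

theorem range_mat : range mat = {M2, M3} := by
  ext; simp [mat]

theorem M2_pow (m : ℕ) : M2 ^ m = !![1, (m : ℝ); 0, 1] := by
  induction m with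
  | zero => simp [Matrix.one_fin_two]
  | succ m ih =>
    rw [pow_succ, ih, M2]
    ext i j
    fin_cases i <;> fin_cases j <;> simp [Matrix.mul_apply, add_comm]

theorem M3_pow (m : ℕ) : M3 ^ m = !![1, 0; (m : ℝ), 1] := by
  induction m with
  | zero => simp [Matrix.one_fin_two]
  | succ m ih =>
    rw [pow_succ, ih, M3]
    ext i j
    fin_cases i <;> fin_cases j <;> simp [Matrix.mul_apply, add_comm]

theorem mat_mul_pow_mul_mat (b : Bool) (m : ℕ) :
    mat b * mat (!b) ^ (m + 2) * mat b =
      (1 / 2 : ℝ) • (mat b ^ (m + 2) * mat (!b) * mat b) +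
      (1 / 6 : ℝ) • (mat b * mat (!b) * mat b * mat (!b) ^ (m + 1)) +
      (1 / 3 : ℝ) • (mat (!b) ^ (m + 1) * mat b * mat (!b) * mat b) := by
  cases b <;>
  · simp only [mat, Bool.not_false, Bool.not_true, cond_true, cond_false, M2_pow, M3_pow]
    ext i j
    fin_cases i <;> fin_cases j <;> simp [M2, M3, Matrix.mul_apply] <;> ring

def wordVec (a : Fin 2 → ℝ) (w : List Bool) : Fin 2 → ℝ := (w.map mat).prod *ᵥ a

theorem XSeq_eq_image_wordVec (a : Fin 2 → ℝ) (k : ℕ) :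
    XSeq {M2, M3} a k = wordVec a '' {w | w.length = k} := by
  rw [← range_mat, XSeq_range_eq_image]
  rfl

theorem wordVec_mem_PHull (a : Fin 2 → ℝ) (w : List Bool) :
    wordVec a w ∈ PHull {M2, M3} a w.length :=
  subset_convexHull ℝ _ (by rw [XSeq_eq_image_wordVec]; exact ⟨w, rfl, rfl⟩)

theorem wordVec_append_append (a : Fin 2 → ℝ) (w₁ u w₂ : List Bool) :
    wordVec a (w₁ ++ u ++ w₂) =
      ((w₁.map mat).prod * (u.map mat).prod * (w₂.map mat).prod) *ᵥ a := by
  simp only [wordVec, List.map_append, List.prod_append]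

def enclosedRun (b : Bool) (m : ℕ) : List Bool := b :: List.replicate (m + 2) (!b) ++ [b]

def HasEnclosedRun (w : List Bool) : Prop := ∃ b m, enclosedRun b m <:+: w

theorem exists_lt_wordVec_eq_of_mem_EPts {a : Fin 2 → ℝ} {w : List Bool} (hw : HasEnclosedRun w)
    (hx : wordVec a w ∈ EPts {M2, M3} a w.length) :
    ∃ w', w'.length = w.length ∧ w' < w ∧ wordVec a w' = wordVec a w := by
  obtain ⟨b, m, w₁, w₂, rfl⟩ := hw
  set u₁ := List.replicate (m + 2) b ++ [!b, b]
  set u₂ := [b, !b, b] ++ List.replicate (m + 1) (!b)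
  set u₃ := List.replicate (m + 1) (!b) ++ [b, !b, b]
  have hcomb : (1 / 2 : ℝ) • wordVec a (w₁ ++ u₁ ++ w₂) + (1 / 6 : ℝ) • wordVec a (w₁ ++ u₂ ++ w₂)
      + (1 / 3 : ℝ) • wordVec a (w₁ ++ u₃ ++ w₂) = wordVec a (w₁ ++ enclosedRun b m ++ w₂) := by
    simp only [wordVec_append_append, u₁, u₂, u₃, enclosedRun, List.map_append, List.map_cons,
      List.map_replicate, List.map_nil, List.prod_append, List.prod_cons, List.prod_replicate,
      List.prod_nil, mul_one]
    rw [← mul_assoc (mat b), mat_mul_pow_mul_mat]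
    simp only [mul_add, add_mul, mul_smul_comm, smul_mul_assoc, Matrix.add_mulVec,
      Matrix.smul_mulVec, mul_assoc]
  have hlen : ∀ u : List Bool, u.length = m + 4 →
      (w₁ ++ u ++ w₂).length = (w₁ ++ enclosedRun b m ++ w₂).length := by
    intro u hu
    simp only [enclosedRun, List.length_append, List.length_cons, List.length_replicate,
      List.length_nil, hu]
  have hmem : ∀ u : List Bool, u.length = m + 4 →
      wordVec a (w₁ ++ u ++ w₂) ∈ PHull {M2, M3} a (w₁ ++ enclosedRun b m ++ w₂).length :=
    fun u hu ↦ hlen u hu ▸ wordVec_mem_PHull a _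
  obtain ⟨h₁, -, h₃⟩ := (convex_convexHull ℝ _).eq_of_mem_extremePoints_of_smul_add_smul_add_smul
    hx (hmem u₁ (by simp [u₁])) (hmem u₂ (by simp [u₂])) (hmem u₃ (by simp [u₃]))
    (by norm_num) (by norm_num) (by norm_num) (by norm_num) hcomb
  cases b
  · refine ⟨_, hlen u₁ (by simp [u₁]),
      List.append_lt_append_of_lt ?_ (by simp [u₁, enclosedRun]), h₁⟩
    exact .cons (.rel Bool.false_lt_true)
  · refine ⟨_, hlen u₃ (by simp [u₃]),
      List.append_lt_append_of_lt ?_ (by simp [u₃, enclosedRun]), h₃⟩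
    exact .rel Bool.false_lt_true

theorem exists_not_hasEnclosedRun_of_mem_EPts {a x : Fin 2 → ℝ} {k : ℕ}
    (hx : x ∈ EPts {M2, M3} a k) :
    ∃ w : List Bool, w.length = k ∧ ¬ HasEnclosedRun w ∧ wordVec a w = x := by
  set S := {w : List Bool | w.length = k ∧ wordVec a w = x}
  have hS : S.Nonempty := by
    obtain ⟨w, hw, rfl⟩ := XSeq_eq_image_wordVec a k ▸ extremePoints_convexHull_subset hx
    exact ⟨w, hw, rfl⟩
  obtain ⟨w, hmin⟩ := ((List.finite_length_eq Bool k).subset fun _ h ↦ h.1).exists_minimal hS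
  obtain ⟨rfl, rfl⟩ := hmin.prop
  refine ⟨w, rfl, fun hw ↦ ?_, rfl⟩
  obtain ⟨w', hlen, hlt, hval⟩ := exists_lt_wordVec_eq_of_mem_EPts hw hx
  exact hmin.not_lt ⟨hlen, hval⟩ hlt

theorem HasEnclosedRun.mono {u v : List Bool} (h : HasEnclosedRun u) (huv : u <:+: v) :
    HasEnclosedRun v :=
  let ⟨b, m, hb⟩ := h
  ⟨b, m, hb.trans huv⟩

theorem forall_eq_not_of_not_hasEnclosedRun {b : Bool} {n : ℕ} {v : List Bool}
    (h : ¬ HasEnclosedRun (b :: List.replicate (n + 2) (!b) ++ v)) : ∀ x ∈ v, x = !b := by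
  induction v generalizing n with
  | nil => simp
  | cons x v ih =>
    have hx : x = !b := by
      by_contra hx
      rw [Bool.eq_not_of_ne hx, Bool.not_not] at h
      exact h ⟨b, n, [], v, by simp [enclosedRun]⟩
    subst hx
    refine List.forall_mem_cons.2 ⟨rfl, ih (n := n + 1) ?_⟩
    simpa [List.replicate_succ'] using h

def alternating : Bool → ℕ → List Bool
  | _, 0 => []
  | d, j + 1 => d :: alternating (!d) j

theorem length_alternating (d : Bool) (j : ℕ) : (alternating d j).length = j := by
  induction j generalizing d with
  | zero => rfl
  | succ j ih => simp [alternating, ih]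

theorem exists_alternating_append_replicate {d : Bool} {v : List Bool}
    (h : ¬ HasEnclosedRun ((!d) :: d :: v)) :
    ∃ j r e, d :: v = alternating d j ++ List.replicate r e := by
  induction v generalizing d with
  | nil => exact ⟨1, 0, d, rfl⟩
  | cons x v ih =>
    by_cases hx : x = d
    · subst hx
      have hv := forall_eq_not_of_not_hasEnclosedRun (b := !x) (n := 0) (v := v) (by simpa using h)
      refine ⟨0, v.length + 2, x, ?_⟩
      simp only [alternating, List.nil_append, List.replicate_succ, Bool.not_not] at hv ⊢
      rw [← List.eq_replicate_iff.2 ⟨rfl, hv⟩]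
    · rw [Bool.eq_not_of_ne hx] at h ⊢
      obtain ⟨j, r, e, hj⟩ := ih (d := !d) fun h' ↦
        h (h'.mono (by rw [Bool.not_not]; exact (List.suffix_cons _ _).isInfix))
      exact ⟨j + 1, r, e, by rw [hj]; rfl⟩

theorem exists_replicate_append_alternating_append_replicate {w : List Bool}
    (h : ¬ HasEnclosedRun w) :
    ∃ a c j d r e, w = List.replicate a c ++ (alternating d j ++ List.replicate r e) := by
  induction w with
  | nil => exact ⟨0, true, 0, true, 0, true, rfl⟩
  | cons c v ih =>
    obtain ⟨_ | a, c', j, d, r, e, hv⟩ := ih fun h' ↦ h (h'.mono (List.suffix_cons c v).isInfix)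
    · exact ⟨1, c, j, d, r, e, by simp [hv]⟩
    by_cases hc : c' = c
    · exact ⟨a + 2, c, j, d, r, e, by simp [hv, hc, List.replicate_succ]⟩
    obtain rfl : c = !c' := Bool.eq_not_of_ne (Ne.symm hc)
    rw [hv, List.replicate_succ, List.cons_append] at h ⊢
    obtain ⟨j', r', e', h'⟩ := exists_alternating_append_replicate h
    exact ⟨1, !c', j', c', r', e', by rw [h']; rfl⟩

def normalWord (k : ℕ) : Bool × Bool × Bool × Fin (k + 1) × Fin (k + 1) → List Bool
  | (c, d, e, a, j) => List.replicate a c ++ (alternating d j ++ List.replicate (k - a - j) e)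

theorem EPts_subset_range_normalWord (a : Fin 2 → ℝ) (k : ℕ) :
    EPts {M2, M3} a k ⊆ range (wordVec a ∘ normalWord k) := by
  intro x hx
  obtain ⟨w, rfl, hw, rfl⟩ := exists_not_hasEnclosedRun_of_mem_EPts hx
  obtain ⟨i, c, j, d, r, e, rfl⟩ := exists_replicate_append_alternating_append_replicate hw
  have hlen : (List.replicate i c ++ (alternating d j ++ List.replicate r e)).length =
      i + j + r := by
    simp [length_alternating, add_assoc]
  refine ⟨(c, d, e, ⟨i, by omega⟩, ⟨j, by omega⟩), ?_⟩
  simp only [Function.comp_apply, normalWord, hlen, show i + j + r - i - j = r by omega]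

theorem NExt_le (a : Fin 2 → ℝ) (k : ℕ) : NExt {M2, M3} a k ≤ 8 * (k + 1) ^ 2 :=
  calc NExt {M2, M3} a k ≤ (range (wordVec a ∘ normalWord k)).ncard :=
        ncard_le_ncard (EPts_subset_range_normalWord a k) (finite_range _)
    _ ≤ Nat.card (Bool × Bool × Bool × Fin (k + 1) × Fin (k + 1)) := by
        rw [← Nat.card_coe_set_eq]
        exact Finite.card_range_le _
    _ = 8 * (k + 1) ^ 2 := by simp [Nat.card_eq_fintype_card]; ring

end ShearWords

/-- `N_k(Σ₃, a) = O(k²)` uniformly in `a`, where `Σ₃ = {A₂, A₃}`. -/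
theorem stmt17 : ∃ α : ℝ, 0 < α ∧ ∃ k₀ : ℕ, ∀ a : Fin 2 → ℝ, ∀ k : ℕ, k₀ ≤ k →
    (NExt {M2, M3} a k : ℝ) ≤ α * (k : ℝ) ^ 2 := by
  refine ⟨32, by norm_num, 1, fun a k hk ↦ ?_⟩
  have hk : (1 : ℝ) ≤ k := by exact_mod_cast hk
  calc (NExt {M2, M3} a k : ℝ) ≤ 8 * ((k : ℝ) + 1) ^ 2 := by exact_mod_cast ShearWords.NExt_le a k
    _ ≤ 32 * (k : ℝ) ^ 2 := by nlinarith

end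
end

section
/- There exist a real number α > 0 and a natural number k₀ such that for every a ∈ ℝ² and every integer k ≥ k₀, N_k(Σ₄, a) ≤ α·k², where Σ₄ = {A₄, A₅}. Moreover, for every even natural number k and every a ∈ ℝ², P_k(Σ₄, a) = P_k(Σ₃, a), where Σ₃ = {A₂, A₃}. -/
/-!
Products of two elements of `{M4, M5}` are exactly the products of two elements of `{M2, M3}`
(`M4 M4 = M2 M3`, `M4 M5 = M2 M2`, `M5 M4 = M3 M3`, `M5 M5 = M3 M2`), and `M4 = M1 M3`,
`M5 = M1 M2` with `M1` the coordinate swap. So the `Σ₄`-orbit at time `k` is the `Σ₃`-orbit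
(`k` even) or its image under `M1` (`k` odd), and the two polytopes have equally many vertices.

For `{P, Q} = {M2, M3}` one has `P Qⁿ⁺¹ P = ½ P Q Pⁿ⁺¹ + ⅓ P Q P Qⁿ + ⅙ Qⁿ P Q P`.
Hence the point of a word containing an inner run `c (!c)ⁿ⁺¹ c` with `n > 0` lies in an open
segment between the point of the word with that run moved to the right and another point of the
polytope. Moving the run lowers `repeatWeight` by `n`, so a word of minimal weight among those
representing a vertex has all inner runs of length one; there are `O(k²)` such words of length `k`.
-/

open Matrix Set

noncomputable section

theorem extremePoints_convexHull_image_subset_s18 {𝕜 E ι : Type*} [Field 𝕜] [LinearOrder 𝕜]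
    [IsStrictOrderedRing 𝕜] [AddCommGroup E] [Module 𝕜 E]
    (f : ι → E) (S T : Set ι) (φ : ι → ℕ)
    (hdescent : ∀ w ∈ S, w ∉ T → ∃ u ∈ S, φ u < φ w ∧
      ∃ y ∈ convexHull 𝕜 (f '' S), f w ∈ openSegment 𝕜 (f u) y) :
    (convexHull 𝕜 (f '' S)).extremePoints 𝕜 ⊆ f '' (S ∩ T) := by
  rintro p hp
  obtain ⟨w, hwS, rfl⟩ := extremePoints_convexHull_subset hp
  induction h : φ w using Nat.strong_induction_on generalizing w with
  | _ n ih =>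
    by_cases hwT : w ∈ T
    · exact ⟨w, ⟨hwS, hwT⟩, rfl⟩
    obtain ⟨u, huS, hlt, y, hy, hseg⟩ := hdescent w hwS hwT
    have hu : f u = f w := hp.2 (subset_convexHull 𝕜 _ ⟨u, huS, rfl⟩) hy hseg
    rw [← hu] at hp ⊢
    exact ih _ (h ▸ hlt) u huS hp rfl

namespace List

variable {α : Type*} [DecidableEq α]

def repeatWeight : List α → ℕ
  | [] => 0
  | x :: t => repeatWeight t + if t.head? = some x then t.length else 0

theorem repeatWeight_append_add (X A B : List α) (hlen : A.length = B.length)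
    (hhead : A.head? = B.head?) :
    repeatWeight (X ++ A) + repeatWeight B = repeatWeight (X ++ B) + repeatWeight A := by
  induction X with
  | nil => exact Nat.add_comm _ _
  | cons x X ih =>
    have hhead' : (X ++ A).head? = (X ++ B).head? := by
      cases X <;> simp [hhead]
    simp only [cons_append, repeatWeight, hhead', length_append, hlen]
    omega

theorem repeatWeight_replicate_succ_succ_append (x : α) (n : ℕ) (t : List α) :
    repeatWeight (replicate (n + 2) x ++ t) =
      repeatWeight (replicate (n + 1) x ++ t) + (n + t.length + 1) := by
  simp [replicate_succ, repeatWeight]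

theorem repeatWeight_cons_cons_of_ne {x y : α} (h : x ≠ y) (t : List α) :
    repeatWeight (x :: y :: t) = repeatWeight (y :: t) := by
  simp [repeatWeight, Ne.symm h]

theorem repeatWeight_replicate_append_cons {x y : α} (h : x ≠ y) (t : List α) (n : ℕ) :
    repeatWeight (replicate (n + 1) x ++ y :: t) =
      repeatWeight (replicate (n + 1) y ++ t) + n := by
  induction n with
  | zero => simp [repeatWeight_cons_cons_of_ne h]
  | succ n ih =>
    rw [repeatWeight_replicate_succ_succ_append, repeatWeight_replicate_succ_succ_append, ih,
      length_cons]
    omega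

theorem repeatWeight_append_inner_run {x y : α} (h : x ≠ y) (X Z : List α) (n : ℕ) :
    repeatWeight (X ++ x :: (replicate (n + 1) y ++ x :: Z)) =
      repeatWeight (X ++ x :: y :: (replicate (n + 1) x ++ Z)) + n := by
  have hA : repeatWeight (x :: (replicate (n + 1) y ++ x :: Z)) =
      repeatWeight (replicate (n + 1) x ++ Z) + n := by
    rw [replicate_succ, cons_append, repeatWeight_cons_cons_of_ne h, ← cons_append,
      ← replicate_succ, repeatWeight_replicate_append_cons h.symm]
  have hB : repeatWeight (x :: y :: (replicate (n + 1) x ++ Z)) =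
      repeatWeight (replicate (n + 1) x ++ Z) := by
    rw [repeatWeight_cons_cons_of_ne h, replicate_succ, cons_append,
      repeatWeight_cons_cons_of_ne h.symm]
  have := repeatWeight_append_add X (x :: (replicate (n + 1) y ++ x :: Z))
    (x :: y :: (replicate (n + 1) x ++ Z)) (by simp only [length_cons, length_append, length_replicate]; omega) rfl
  omega

end List

section XSeq

open scoped Pointwise

variable {n : ℕ} (S T : Set (Matrix (Fin n) (Fin n) ℝ)) (a : Fin n → ℝ)

theorem XSeq_range {β : Type*} (g : β → Matrix (Fin n) (Fin n) ℝ) (k : ℕ) :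
    XSeq (range g) a k = (fun w : List β => (w.map g).prod *ᵥ a) '' {w | w.length = k} := by
  induction k with
  | zero => simp [XSeq, List.length_eq_zero_iff]
  | succ k ih =>
    ext v
    simp only [XSeq, ih, biUnion_range, mem_iUnion, mem_image, mem_ofPred_eq]
    constructor
    · rintro ⟨b, _, ⟨w, hw, rfl⟩, rfl⟩
      exact ⟨b :: w, by simpa using hw, by simp [mulVec_mulVec]⟩
    · rintro ⟨_ | ⟨b, w⟩, hw, rfl⟩
      · simp at hw
      · exact ⟨b, _, ⟨w, by simpa using hw, rfl⟩, by simp [mulVec_mulVec]⟩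

theorem XSeq_add_two (k : ℕ) :
    XSeq S a (k + 2) = ⋃ P ∈ S * S, P.mulVec '' XSeq S a k := by
  ext v
  simp only [XSeq, mem_iUnion, mem_image, mem_mul]
  constructor
  · rintro ⟨A, hA, _, ⟨B, hB, x, hx, rfl⟩, rfl⟩
    exact ⟨A * B, ⟨A, hA, B, hB, rfl⟩, x, hx, (mulVec_mulVec x A B).symm⟩
  · rintro ⟨_, ⟨A, hA, B, hB, rfl⟩, x, hx, rfl⟩
    exact ⟨A, hA, _, ⟨B, hB, x, hx, rfl⟩, mulVec_mulVec x A B⟩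

theorem XSeq_two_mul_of_mul_self_eq (h : S * S = T * T) (k : ℕ) :
    XSeq S a (2 * k) = XSeq T a (2 * k) := by
  induction k with
  | zero => rfl
  | succ k ih => rw [Nat.mul_succ, XSeq_add_two, XSeq_add_two, ih, h]

theorem XSeq_succ_of_eq_image_mul {k : ℕ} (J : Matrix (Fin n) (Fin n) ℝ)
    (hS : S = (J * ·) '' T) (h : XSeq S a k = XSeq T a k) :
    XSeq S a (k + 1) = J.mulVec '' XSeq T a (k + 1) := by
  subst hS
  rw [XSeq, XSeq, h]
  simp only [biUnion_image, image_iUnion₂, image_image, mulVec_mulVec]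

theorem NExt_eq_of_XSeq_eq_image {k : ℕ} (e : (Fin n → ℝ) ≃ₗ[ℝ] (Fin n → ℝ))
    (h : XSeq S a k = e '' XSeq T a k) : NExt S a k = NExt T a k := by
  have hull : PHull S a k = e '' PHull T a k := by
    rw [PHull, PHull, h]
    exact (e.toLinearMap.image_convexHull _).symm
  rw [NExt, NExt, EPts, EPts, hull, ← image_extremePoints, ncard_image_of_injective _ e.injective]

end XSeq

section Shear

def shear : Bool → Matrix (Fin 2) (Fin 2) ℝ
  | false => M2
  | true => M3

def shearProd (w : List Bool) : Matrix (Fin 2) (Fin 2) ℝ := (w.map shear).prod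

theorem range_shear : range shear = {M2, M3} := by
  ext; simp [shear]

theorem M2_pow (m : ℕ) : M2 ^ m = !![1, (m : ℝ); 0, 1] := by
  induction m with
  | zero => simp [one_fin_two]
  | succ m ih =>
    rw [pow_succ, ih, M2, mul_fin_two]
    simp [add_comm]

theorem M3_pow (m : ℕ) : M3 ^ m = !![1, 0; (m : ℝ), 1] := by
  induction m with
  | zero => simp [one_fin_two]
  | succ m ih =>
    rw [pow_succ, ih, M3, mul_fin_two]
    simp

theorem shear_mul_pow_mul (c : Bool) (n : ℕ) :
    shear c * shear (!c) ^ (n + 1) * shear c =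
      (1 / 2 : ℝ) • (shear c * shear (!c) * shear c ^ (n + 1)) +
      (1 / 3 : ℝ) • (shear c * shear (!c) * shear c * shear (!c) ^ n) +
      (1 / 6 : ℝ) • (shear (!c) ^ n * (shear c * shear (!c) * shear c)) := by
  cases c <;>
  · simp only [shear, Bool.not_false, Bool.not_true, M2_pow, M3_pow]
    ext i j
    fin_cases i <;> fin_cases j <;> simp [M2, M3] <;> ring

theorem shearProd_inner_run (X Z : List Bool) (c : Bool) (n : ℕ) :
    shearProd (X ++ c :: (List.replicate (n + 1) (!c) ++ c :: Z)) =
      (1 / 2 : ℝ) • shearProd (X ++ c :: (!c) :: (List.replicate (n + 1) c ++ Z)) +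
      (1 / 3 : ℝ) • shearProd (X ++ c :: (!c) :: c :: (List.replicate n (!c) ++ Z)) +
      (1 / 6 : ℝ) • shearProd (X ++ List.replicate n (!c) ++ c :: (!c) :: c :: Z) := by
  have h := congrArg (fun P => shearProd X * (P * shearProd Z)) (shear_mul_pow_mul c n)
  simp only [shearProd, List.map_append, List.map_cons, List.map_replicate, List.prod_append,
    List.prod_cons, List.prod_replicate] at h ⊢
  simp only [add_mul, mul_add, smul_mul_assoc, mul_smul_comm, mul_assoc] at h ⊢
  exact h

end Shear

section TameWords

open List

def zigzag : Bool → ℕ → ℕ → List Bool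
  | b, 0, r => replicate r b
  | b, s + 1, r => b :: zigzag (!b) s r

def tame (c : Bool) (m s r : ℕ) : List Bool := replicate m c ++ zigzag (!c) s r

def HasLongInnerRun (w : List Bool) : Prop :=
  ∃ X c n Z, 0 < n ∧ w = X ++ c :: (replicate (n + 1) (!c) ++ c :: Z)

theorem length_zigzag (b : Bool) (s r : ℕ) : (zigzag b s r).length = s + r := by
  induction s generalizing b with
  | zero => simp [zigzag]
  | succ s ih => simp only [zigzag, length_cons, ih]; omega

theorem length_tame (c : Bool) (m s r : ℕ) : (tame c m s r).length = m + s + r := by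
  simp only [tame, length_append, length_replicate, length_zigzag]; omega

theorem zigzag_eq_nil_or_cons (b : Bool) (s r : ℕ) :
    zigzag b s r = [] ∨ ∃ t, zigzag b s r = b :: t := by
  rcases s with _ | s
  · rcases r with _ | r
    · exact .inl rfl
    · exact .inr ⟨replicate r b, rfl⟩
  · exact .inr ⟨_, rfl⟩

theorem HasLongInnerRun.cons {w : List Bool} (h : HasLongInnerRun w) (x : Bool) :
    HasLongInnerRun (x :: w) := by
  obtain ⟨X, c, n, Z, hn, rfl⟩ := h
  exact ⟨x :: X, c, n, Z, hn, rfl⟩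

theorem hasLongInnerRun_or_tame_not_cons_tame (c : Bool) (m s r : ℕ) :
    HasLongInnerRun ((!c) :: tame c m s r) ∨
      ∃ c' m' s' r', (!c) :: tame c m s r = tame c' m' s' r' := by
  rcases m with _ | _ | m
  · rcases s with _ | s
    · exact .inr ⟨!c, r + 1, 0, 0, by simp [tame, zigzag, replicate_succ]⟩
    · exact .inr ⟨!c, 2, s, r, by simp [tame, zigzag, replicate_succ]⟩
  · exact .inr ⟨!c, 1, s + 1, r, by simp [tame, zigzag]⟩
  · rcases zigzag_eq_nil_or_cons (!c) s r with h | ⟨t, ht⟩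
    · exact .inr ⟨!c, 1, 0, m + 2, by simp [tame, zigzag, h]⟩
    · exact .inl ⟨[], !c, m + 1, t, m.succ_pos, by simp [tame, ht]⟩

theorem hasLongInnerRun_or_tame (w : List Bool) :
    HasLongInnerRun w ∨ ∃ c m s r, w = tame c m s r := by
  induction w with
  | nil => exact .inr ⟨false, 0, 0, 0, rfl⟩
  | cons x w ih =>
    rcases ih with h | ⟨c, m, s, r, rfl⟩
    · exact .inl (h.cons x)
    · rcases Bool.eq_or_eq_not x c with rfl | rfl
      · exact .inr ⟨x, m + 1, s, r, by simp [tame, replicate_succ]⟩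
      · exact hasLongInnerRun_or_tame_not_cons_tame c m s r

end TameWords

section Sigma4

open scoped Pointwise

theorem M4_mul_M4 : M4 * M4 = M2 * M3 := by simp [M2, M3, M4]
theorem M4_mul_M5 : M4 * M5 = M2 * M2 := by simp [M2, M4, M5]
theorem M5_mul_M4 : M5 * M4 = M3 * M3 := by simp [M3, M4, M5]
theorem M5_mul_M5 : M5 * M5 = M3 * M2 := by simp [M2, M3, M5]
theorem M1_mul_M3 : M1 * M3 = M4 := by simp [M1, M3, M4]
theorem M1_mul_M2 : M1 * M2 = M5 := by simp [M1, M2, M5]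
theorem M1_mul_M1 : M1 * M1 = 1 := by simp [M1, one_fin_two]

theorem sigma4_mul_self : ({M4, M5} : Set (Matrix (Fin 2) (Fin 2) ℝ)) * {M4, M5} =
    {M2, M3} * {M2, M3} := by
  simp only [insert_eq, union_mul, mul_union, singleton_mul_singleton, M4_mul_M4, M4_mul_M5,
    M5_mul_M4, M5_mul_M5]
  ext
  simp only [mem_union, mem_singleton_iff]
  tauto

theorem sigma4_eq_image : ({M4, M5} : Set (Matrix (Fin 2) (Fin 2) ℝ)) = (M1 * ·) '' {M2, M3} := by
  simp [image_pair, M1_mul_M2, M1_mul_M3, pair_comm]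

def M1_mulVecEquiv : (Fin 2 → ℝ) ≃ₗ[ℝ] (Fin 2 → ℝ) :=
  .ofInvolutive (Matrix.toLin' M1) fun v => by
    simp only [toLin'_apply, mulVec_mulVec, M1_mul_M1, one_mulVec]

theorem XSeq_sigma4_two_mul (a : Fin 2 → ℝ) (m : ℕ) :
    XSeq {M4, M5} a (2 * m) = XSeq {M2, M3} a (2 * m) :=
  XSeq_two_mul_of_mul_self_eq _ _ a sigma4_mul_self m

theorem NExt_sigma4_eq_sigma3 (a : Fin 2 → ℝ) (k : ℕ) : NExt {M4, M5} a k = NExt {M2, M3} a k := by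
  obtain ⟨m, rfl | rfl⟩ := Nat.even_or_odd' k
  · rw [NExt, EPts, PHull, XSeq_sigma4_two_mul]
    rfl
  · exact NExt_eq_of_XSeq_eq_image _ _ a M1_mulVecEquiv
      (XSeq_succ_of_eq_image_mul _ _ a M1 sigma4_eq_image (XSeq_sigma4_two_mul a m))

end Sigma4

section Sigma3

variable (a : Fin 2 → ℝ)

theorem XSeq_sigma3 (k : ℕ) :
    XSeq {M2, M3} a k = (fun w => shearProd w *ᵥ a) '' {w | w.length = k} := by
  rw [← range_shear]
  exact XSeq_range a shear k

theorem EPts_sigma3_subset_tame (k : ℕ) :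
    EPts {M2, M3} a k ⊆ (fun w => shearProd w *ᵥ a) ''
      ({w | w.length = k} ∩ {w | ∃ c m s r, w = tame c m s r}) := by
  rw [EPts, PHull, XSeq_sigma3]
  refine extremePoints_convexHull_image_subset_s18 _ _ _ List.repeatWeight ?_
  rintro w hw hw_tame
  obtain ⟨X, c, n, Z, hn, rfl⟩ := (hasLongInnerRun_or_tame w).resolve_right hw_tame
  have hweight := List.repeatWeight_append_inner_run (Bool.not_ne_self c).symm X Z n
  have hmat := shearProd_inner_run X Z c n
  set u := X ++ c :: (!c) :: (List.replicate (n + 1) c ++ Z)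
  set v₁ := X ++ c :: (!c) :: c :: (List.replicate n (!c) ++ Z)
  set v₂ := X ++ List.replicate n (!c) ++ c :: (!c) :: c :: Z
  have hlen : ∀ v ∈ ({u, v₁, v₂} : Set (List Bool)), v.length = k := by
    simp only [mem_ofPred_eq, List.length_append, List.length_cons, List.length_replicate] at hw
    simp only [mem_insert_iff, mem_singleton_iff, forall_eq_or_imp, forall_eq, u, v₁, v₂,
      List.length_append, List.length_cons, List.length_replicate]
    omega
  have hmem : ∀ v ∈ ({u, v₁, v₂} : Set (List Bool)),
      shearProd v *ᵥ a ∈ (fun w => shearProd w *ᵥ a) '' {w | w.length = k} :=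
    fun v hv => ⟨v, hlen v hv, rfl⟩
  refine ⟨u, hlen u (by simp), by omega, (2 / 3 : ℝ) • (shearProd v₁ *ᵥ a) +
    (1 / 3 : ℝ) • (shearProd v₂ *ᵥ a), ?_, 1 / 2, 1 / 2, by norm_num, by norm_num, by norm_num, ?_⟩
  · exact convex_convexHull ℝ _ (subset_convexHull ℝ _ (hmem v₁ (by simp)))
      (subset_convexHull ℝ _ (hmem v₂ (by simp))) (by norm_num : (0 : ℝ) ≤ 2 / 3)
      (by norm_num : (0 : ℝ) ≤ 1 / 3) (by norm_num)
  · simp only [hmat, add_mulVec, smul_mulVec]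
    module

theorem NExt_sigma3_le_two_mul_sq (k : ℕ) : NExt {M2, M3} a k ≤ 2 * (k + 1) ^ 2 := by
  set P : Finset (Bool × ℕ × ℕ) := .univ ×ˢ .range (k + 1) ×ˢ .range (k + 1)
  set g := fun p : Bool × ℕ × ℕ => shearProd (tame p.1 p.2.1 p.2.2 (k - p.2.1 - p.2.2)) *ᵥ a
  have hsub : EPts {M2, M3} a k ⊆ g '' P := by
    intro x hx
    obtain ⟨w, ⟨hlen, c, m, s, r, rfl⟩, rfl⟩ := EPts_sigma3_subset_tame a k hx
    rw [mem_ofPred_eq, length_tame] at hlen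
    refine ⟨(c, m, s), Finset.mem_coe.2 ?_, ?_⟩
    · simp only [P, Finset.mem_product, Finset.mem_univ, Finset.mem_range, true_and]
      omega
    · simp only [g, ← hlen]
      congr 3
      omega
  calc NExt {M2, M3} a k ≤ (g '' P).ncard := ncard_le_ncard hsub (toFinite _)
    _ ≤ (P : Set (Bool × ℕ × ℕ)).ncard := ncard_image_le (toFinite _)
    _ = 2 * (k + 1) ^ 2 := by simp [P, sq]

end Sigma3

/-- `N_k(Σ₄, a) = O(k²)` uniformly in `a`, where `Σ₄ = {A₄, A₅}`; moreover
`P_k(Σ₄, a) = P_k(Σ₃, a)` for every even `k`, where `Σ₃ = {A₂, A₃}`. -/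
theorem stmt18 :
    (∃ α : ℝ, 0 < α ∧ ∃ k₀ : ℕ, ∀ a : Fin 2 → ℝ, ∀ k : ℕ, k₀ ≤ k →
      (NExt {M4, M5} a k : ℝ) ≤ α * (k : ℝ) ^ 2) ∧
    (∀ k : ℕ, Even k → ∀ a : Fin 2 → ℝ, PHull {M4, M5} a k = PHull {M2, M3} a k) := by
  refine ⟨⟨8, by norm_num, 1, fun a k hk => ?_⟩, fun k ⟨m, hm⟩ a => ?_⟩
  · have hcount : (NExt {M4, M5} a k : ℝ) ≤ 2 * (k + 1) ^ 2 := by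
      rw [NExt_sigma4_eq_sigma3]
      exact_mod_cast NExt_sigma3_le_two_mul_sq a k
    have hk' : (1 : ℝ) ≤ k := by exact_mod_cast hk
    nlinarith
  · rw [hm, ← two_mul, PHull, PHull, XSeq_sigma4_two_mul]

end
end
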